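/- arXiv:0704.3536 — 2 statements merged into one kernel-verified Lean document; each statement's English description precedes it below -/
import Mathlib

section
/- Let S ⊆ ℕ be a telescopic semigroup generated by a telescopic sequence α₁, ..., α_r. Then every element α ∈ S can be written uniquely as α = Σ_{i=1}^r a_i α_i with a₁ ≥ 0 and 0 ≤ a_i < gcd(α₁,...,α_{i-1})/gcd(α₁,...,α_i) for 2 ≤ i ≤ r. -/
/-- `dtel α i = gcd(α₁, …, α_i)` (generators indexed from 1). -/
def dtel (α : ℕ → ℕ) (i : ℕ) : ℕ := (Finset.Icc 1 i).gcd α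

/-- A telescopic sequence `α₁, …, α_r` of positive integers. -/
def IsTelescopic (r : ℕ) (α : ℕ → ℕ) : Prop :=
  (∀ i, 1 ≤ i → i ≤ r → 0 < α i) ∧
  dtel α r = 1 ∧
  ∀ i, 2 ≤ i → i ≤ r →
    α i / dtel α i ∈
      AddSubmonoid.closure {x : ℕ | ∃ j, 1 ≤ j ∧ j < i ∧ x = α j / dtel α (i - 1)}

/-!
Write `d_k = gcd(α₁, …, α_k)` and `D_k = d_{k-1} / d_k`. Existence is proved by induction on
the number of generators: in `Σ b_i α_i`, divide `b_k` by `D_k`; the telescopic condition says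
exactly that `D_k α_k = d_{k-1} (α_k / d_k)` is a combination of `α₁, …, α_{k-1}`, so the
quotient part can be pushed down to the earlier generators, leaving the remainder `< D_k` as
the top coefficient. Uniqueness is the converse: reducing modulo `d_{k-1}` kills the first
`k - 1` terms, and since `gcd(d_{k-1}, α_k) = d_k` the top coefficient is determined
modulo `D_k`, hence determined by the bound.
-/

def IsReducedCoeff (α : ℕ → ℕ) (k : ℕ) (a : ℕ → ℕ) : Prop :=
  ∀ i, 2 ≤ i → i ≤ k → a i < dtel α (i - 1) / dtel α i

section dtel

variable {α : ℕ → ℕ} {k : ℕ}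

@[simp]
lemma dtel_zero : dtel α 0 = 0 := by
  simp [dtel]

lemma dtel_succ : dtel α (k + 1) = Nat.gcd (α (k + 1)) (dtel α k) := by
  rw [dtel, ← Finset.insert_Icc_right_eq_Icc_add_one (by omega), Finset.gcd_insert]
  rfl

lemma dtel_dvd {j : ℕ} (hj : 1 ≤ j) (hjk : j ≤ k) : dtel α k ∣ α j :=
  Finset.gcd_dvd (Finset.mem_Icc.2 ⟨hj, hjk⟩)

lemma dtel_succ_dvd : dtel α (k + 1) ∣ dtel α k :=
  dtel_succ (α := α) ▸ Nat.gcd_dvd_right _ _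

lemma dtel_pos (hα : 0 < α 1) (hk : 1 ≤ k) : 0 < dtel α k :=
  Nat.pos_of_dvd_of_pos (dtel_dvd le_rfl hk) hα

lemma dtel_div_dtel_succ_pos (hα : 0 < α 1) (hk : 1 ≤ k) : 0 < dtel α k / dtel α (k + 1) :=
  Nat.div_pos (Nat.le_of_dvd (dtel_pos hα hk) dtel_succ_dvd) (dtel_pos hα (by omega))

lemma dtel_dvd_sum (a : ℕ → ℕ) : dtel α k ∣ ∑ i ∈ Finset.Icc 1 k, a i * α i :=
  Finset.dvd_sum fun i hi =>
    (dtel_dvd (Finset.mem_Icc.1 hi).1 (Finset.mem_Icc.1 hi).2).mul_left (a i)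

lemma dtel_div_mul_eq_mul_div : dtel α k / dtel α (k + 1) * α (k + 1)
    = dtel α k * (α (k + 1) / dtel α (k + 1)) := by
  rw [Nat.div_mul_right_comm dtel_succ_dvd,
    Nat.mul_div_assoc _ (dtel_dvd (by omega) le_rfl)]

end dtel

lemma exists_sum_eq_of_mem_closure {β : ℕ → ℕ} {k x : ℕ}
    (hx : x ∈ AddSubmonoid.closure {y : ℕ | ∃ i, 1 ≤ i ∧ i ≤ k ∧ y = β i}) :
    ∃ b : ℕ → ℕ, x = ∑ i ∈ Finset.Icc 1 k, b i * β i := by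
  induction hx using AddSubmonoid.closure_induction with
  | mem y hy =>
    obtain ⟨j, hj, hjk, rfl⟩ := hy
    refine ⟨Pi.single j 1, ?_⟩
    rw [Finset.sum_eq_single_of_mem j (Finset.mem_Icc.2 ⟨hj, hjk⟩)]
    · simp
    · intro i _ hij
      simp [hij]
  | zero => exact ⟨0, by simp⟩
  | add y z _ _ hy hz =>
    obtain ⟨b, rfl⟩ := hy
    obtain ⟨c, rfl⟩ := hz
    exact ⟨b + c, by simp [add_mul, Finset.sum_add_distrib]⟩

namespace IsTelescopic

variable {r : ℕ} {α : ℕ → ℕ}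

/-- For `k = 0` both sides vanish, since `dtel α 0 = 0`. -/
lemma exists_sum_eq_dtel_div_mul (h : IsTelescopic r α) {k : ℕ} (hk : k + 1 ≤ r) :
    ∃ c : ℕ → ℕ, dtel α k / dtel α (k + 1) * α (k + 1)
      = ∑ i ∈ Finset.Icc 1 k, c i * α i := by
  rcases Nat.eq_zero_or_pos k with rfl | hk1
  · exact ⟨0, by simp⟩
  have hmem := h.2.2 (k + 1) (by omega) hk
  have hgen : {x | ∃ j, 1 ≤ j ∧ j < k + 1 ∧ x = α j / dtel α (k + 1 - 1)}
      = {x | ∃ j, 1 ≤ j ∧ j ≤ k ∧ x = α j / dtel α k} := by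
    ext x
    simp only [Nat.add_sub_cancel, Nat.lt_succ_iff]
  rw [hgen] at hmem
  obtain ⟨c, hc⟩ := exists_sum_eq_of_mem_closure hmem
  refine ⟨c, ?_⟩
  rw [dtel_div_mul_eq_mul_div, hc, Finset.mul_sum]
  refine Finset.sum_congr rfl fun i hi => ?_
  rw [Finset.mem_Icc] at hi
  rw [mul_left_comm, Nat.mul_div_cancel' (dtel_dvd hi.1 hi.2)]

lemma exists_reduced_sum_eq (h : IsTelescopic r α) {k : ℕ} (hk : k ≤ r) (b : ℕ → ℕ) :
    ∃ a : ℕ → ℕ, (∀ i, (i = 0 ∨ k < i) → a i = 0) ∧ IsReducedCoeff α k a ∧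
      ∑ i ∈ Finset.Icc 1 k, a i * α i = ∑ i ∈ Finset.Icc 1 k, b i * α i := by
  induction k generalizing b with
  | zero => exact ⟨0, fun _ _ => rfl, fun i hi hi0 => by omega, by simp⟩
  | succ k ih =>
    set D := dtel α k / dtel α (k + 1)
    obtain ⟨c, hc⟩ := h.exists_sum_eq_dtel_div_mul hk
    obtain ⟨a, ha0, hred, hsum⟩ := ih (by omega) (fun i => b i + b (k + 1) / D * c i)
    refine ⟨Function.update a (k + 1) (b (k + 1) % D), ?_, ?_, ?_⟩
    · intro i hi
      rw [Function.update_of_ne (by omega)]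
      exact ha0 i (by omega)
    · intro i hi2 hik
      rcases Nat.lt_or_eq_of_le hik with hik | rfl
      · rw [Function.update_of_ne (by omega)]
        exact hred i hi2 (by omega)
      · simpa using Nat.mod_lt _ (dtel_div_dtel_succ_pos (h.1 1 le_rfl (by omega)) (by omega))
    have hlow : ∑ i ∈ Finset.Icc 1 k, Function.update a (k + 1) (b (k + 1) % D) i * α i
        = ∑ i ∈ Finset.Icc 1 k, a i * α i :=
      Finset.sum_congr rfl fun i hi => by
        rw [Function.update_of_ne (by simp at hi; omega)]
    have htop : b (k + 1) / D * (D * α (k + 1)) + b (k + 1) % D * α (k + 1)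
        = b (k + 1) * α (k + 1) := by
      rw [← mul_assoc, ← add_mul, mul_comm _ D, Nat.div_add_mod]
    rw [Finset.sum_Icc_succ_top (by omega), Finset.sum_Icc_succ_top (by omega), hlow, hsum,
      Function.update_self, ← htop]
    simp only [add_mul, Finset.sum_add_distrib, mul_assoc, ← Finset.mul_sum, ← hc]
    ring

end IsTelescopic

lemma IsReducedCoeff.eqOn_of_sum_eq {α : ℕ → ℕ} {k : ℕ} {a a' : ℕ → ℕ}
    (hα : 0 < α 1) (ha : IsReducedCoeff α k a) (ha' : IsReducedCoeff α k a')
    (hsum : ∑ i ∈ Finset.Icc 1 k, a i * α i = ∑ i ∈ Finset.Icc 1 k, a' i * α i) :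
    ∀ i, 1 ≤ i → i ≤ k → a i = a' i := by
  induction k with
  | zero => intro i hi hik; omega
  | succ k ih =>
    rw [Finset.sum_Icc_succ_top (by omega), Finset.sum_Icc_succ_top (by omega)] at hsum
    have htop : a (k + 1) = a' (k + 1) := by
      rcases Nat.eq_zero_or_pos k with rfl | hk
      · simpa using Nat.eq_of_mul_eq_mul_right hα (by simpa using hsum)
      have hmod : a (k + 1) * α (k + 1) ≡ a' (k + 1) * α (k + 1) [MOD dtel α k] :=
        Nat.ModEq.add_left_cancel
          (((Nat.modEq_zero_iff_dvd.2 (dtel_dvd_sum a)).trans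
            (Nat.modEq_zero_iff_dvd.2 (dtel_dvd_sum a')).symm)) (by rw [hsum])
      have hmodD := Nat.ModEq.cancel_right_div_gcd (dtel_pos hα hk) hmod
      rw [Nat.gcd_comm, ← dtel_succ] at hmodD
      exact hmodD.eq_of_lt_of_lt (by simpa using ha (k + 1) (by omega) le_rfl)
        (by simpa using ha' (k + 1) (by omega) le_rfl)
    intro i hi hik
    rcases Nat.lt_or_eq_of_le hik with hik | rfl
    · rw [htop] at hsum
      exact ih (fun j hj hjk => ha j hj (by omega))
        (fun j hj hjk => ha' j hj (by omega)) (Nat.add_right_cancel hsum) i hi (by omega)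
    · exact htop

theorem telescopic_unique_representation_general (r : ℕ) (α : ℕ → ℕ)
    (h : IsTelescopic r α) :
    ∀ x ∈ AddSubmonoid.closure {y : ℕ | ∃ i, 1 ≤ i ∧ i ≤ r ∧ y = α i},
      ∃! a : ℕ → ℕ,
        (∀ i, (i = 0 ∨ r < i) → a i = 0) ∧
        (∀ i, 2 ≤ i → i ≤ r → a i < dtel α (i - 1) / dtel α i) ∧
        x = ∑ i ∈ Finset.Icc 1 r, a i * α i := by
  intro x hx
  obtain ⟨b, rfl⟩ := exists_sum_eq_of_mem_closure hx
  obtain ⟨a, ha0, hred, hsum⟩ := h.exists_reduced_sum_eq le_rfl b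
  refine ⟨a, ⟨ha0, hred, hsum.symm⟩, ?_⟩
  rintro a' ⟨ha0', hred', hsum'⟩
  funext i
  by_cases hi : 1 ≤ i ∧ i ≤ r
  · exact IsReducedCoeff.eqOn_of_sum_eq (h.1 1 le_rfl (hi.1.trans hi.2)) hred' hred
      (hsum'.symm.trans hsum.symm) i hi.1 hi.2
  · rw [ha0 i (by omega), ha0' i (by omega)]

/-- every element of a telescopic semigroup has a unique
representation `α = Σ a_i α_i` with `a₁ ≥ 0` and
`0 ≤ a_i < gcd(α₁,…,α_{i-1}) / gcd(α₁,…,α_i)` for `2 ≤ i ≤ r`. -/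
theorem telescopic_unique_representation (r : ℕ) (hr : 1 ≤ r) (α : ℕ → ℕ)
    (h : IsTelescopic r α) :
    ∀ x ∈ AddSubmonoid.closure {y : ℕ | ∃ i, 1 ≤ i ∧ i ≤ r ∧ y = α i},
      ∃! a : ℕ → ℕ,
        (∀ i, (i = 0 ∨ r < i) → a i = 0) ∧
        (∀ i, 2 ≤ i → i ≤ r → a i < dtel α (i - 1) / dtel α i) ∧
        x = ∑ i ∈ Finset.Icc 1 r, a i * α i :=
  telescopic_unique_representation_general r α h
end

section
/- Let Δ = {δ₀, ..., δ_g} ⊆ (ℕ_{≥0})² be a δ-sequence of type C and S_Δ the semigroup it generates. Let k be a field and k[S_Δ] the semigroup algebra. Let ψ : k[V₀,...,V_g] → k[S_Δ] be the k-algebra epimorphism with ψ(V_i) = U^{δ_i}. Then the kernel of ψ is the ideal generated by the binomials V_i^{n_i} − Π_{j=0}^{i-1} V_j^{a_{ij}} for 0 < i < g, where n_i δ_i = Σ_{j=0}^{i-1} a_{ij} δ_j is the unique expression with a_{i0} > 0 and 0 ≤ a_{ij} < n_j for 1 ≤ j ≤ i−1. -/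
/-!
Rewriting `X i ^ n i ↦ ∏_{j<i} X j ^ a i j` inside a monomial lowers its exponent vector in the
colexicographic order, which is well founded; so modulo the binomial ideal every polynomial is
congruent to one supported on reduced exponents `c` (those with `c j < n j` at every relation
index `j`). The map sends `X^c` to `U^{Σ c_j δ_j}`, and uniqueness of the constrained expressions
says this is injective on reduced exponents, so a reduced polynomial in the kernel is zero.
-/

open MvPolynomial

theorem MvPolynomial.exists_support_subset_sub_mem {σ R : Type*} [CommRing R]
    {I : Ideal (MvPolynomial σ R)} {T : Set (σ →₀ ℕ)}
    (h : ∀ c, ∃ c' ∈ T, monomial c 1 - monomial c' 1 ∈ I) (P : MvPolynomial σ R) :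
    ∃ Q : MvPolynomial σ R, ↑Q.support ⊆ T ∧ P - Q ∈ I := by
  classical
  induction P using MvPolynomial.induction_on' with
  | monomial c r =>
    obtain ⟨c', hc', hmem⟩ := h c
    refine ⟨monomial c' r,
      fun e he => Finset.mem_singleton.1 (support_monomial_subset he) ▸ hc', ?_⟩
    rw [← mul_one r, ← smul_eq_mul, ← smul_monomial, ← smul_monomial, ← smul_sub]
    exact I.smul_of_tower_mem r hmem
  | add P₁ P₂ h₁ h₂ =>
    obtain ⟨Q₁, hQ₁, hPQ₁⟩ := h₁
    obtain ⟨Q₂, hQ₂, hPQ₂⟩ := h₂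
    refine ⟨Q₁ + Q₂,
      (Finset.coe_subset.2 support_add).trans (by simpa using ⟨hQ₁, hQ₂⟩), ?_⟩
    rw [add_sub_add_comm]
    exact I.add_mem hPQ₁ hPQ₂

section Weight

variable {ι k M : Type*} [CommSemiring k] [AddCommMonoid M] (δ : ι → M)

theorem aeval_single_eq_mapDomain (P : MvPolynomial ι k) :
    aeval (fun i => (AddMonoidAlgebra.single (δ i) 1 : AddMonoidAlgebra k M)) P =
      AddMonoidAlgebra.mapDomain (Finsupp.linearCombination ℕ δ) P := by
  have : aeval (R := k) (fun i => (AddMonoidAlgebra.single (δ i) 1 : AddMonoidAlgebra k M)) =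
      AddMonoidAlgebra.mapDomainAlgHom k k (Finsupp.linearCombination ℕ δ).toAddMonoidHom := by
    refine MvPolynomial.algHom_ext fun i => ?_
    rw [aeval_X, AddMonoidAlgebra.mapDomainAlgHom_apply]
    refine (AddMonoidAlgebra.mapDomain_single.trans ?_).symm
    simp
  exact DFunLike.congr_fun this P

theorem eq_zero_of_aeval_single_eq_zero {T : Set (ι →₀ ℕ)}
    (hT : Set.InjOn (Finsupp.linearCombination ℕ δ) T) {P : MvPolynomial ι k}
    (hP : ↑P.support ⊆ T)
    (h : aeval (fun i => (AddMonoidAlgebra.single (δ i) 1 : AddMonoidAlgebra k M)) P = 0) :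
    P = 0 := by
  ext c
  by_cases hc : c ∈ P.support
  · have := congr(AddMonoidAlgebra.coeff $h (Finsupp.linearCombination ℕ δ c))
    rwa [aeval_single_eq_mapDomain, AddMonoidAlgebra.coeff_mapDomain,
      Finsupp.mapDomain_apply' T _ hP hT (hP hc)] at this
  · simpa using hc

end Weight

section Binomial

variable {ι : Type*} [Fintype ι] [LinearOrder ι] (k : Type*) [CommRing k]
  (R : Set ι) (n : ι → ℕ) (a : ι → ι → ℕ)

noncomputable def binomialIdeal : Ideal (MvPolynomial ι k) :=
  Ideal.span ((fun i => X i ^ n i - ∏ j ∈ Finset.univ.filter (· < i), X j ^ a i j) '' R)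

variable {k R n a}

theorem monomial_sub_monomial_mem_binomialIdeal {i : ι} (hi : i ∈ R) (d : ι →₀ ℕ) :
    monomial (d + Finsupp.single i (n i)) 1 -
        monomial (d + ∑ j ∈ Finset.univ.filter (· < i), Finsupp.single j (a i j)) 1 ∈
      binomialIdeal k R n a := by
  rw [← mul_one (1 : k), ← monomial_mul, ← monomial_mul, ← mul_sub, monomial_sum_one]
  simp only [← X_pow_eq_monomial]
  exact Ideal.mul_mem_left _ _ (Ideal.subset_span ⟨i, hi, rfl⟩)

theorem toColex_sum_single_lt_single {i : ι} (hn : 0 < n i) :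
    toColex (∑ j ∈ Finset.univ.filter (· < i), Finsupp.single j (a i j)) <
      toColex (Finsupp.single i (n i)) := by
  have hvanish : ∀ l, i ≤ l →
      (∑ j ∈ Finset.univ.filter (· < i), Finsupp.single j (a i j)) l = 0 := by
    intro l hl
    rw [Finsupp.finsetSum_apply]
    refine Finset.sum_eq_zero fun j hj => Finsupp.single_eq_of_ne ?_
    exact ((Finset.mem_filter.1 hj).2.trans_le hl).ne'
  refine Finsupp.Colex.lt_iff.2 ⟨i, fun l hl => ?_, ?_⟩
  · simp [hvanish l hl.le, Finsupp.single_eq_of_ne hl.ne']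
  · simpa [hvanish i le_rfl] using hn

theorem exists_reduced_monomial_sub_mem_binomialIdeal (hn : ∀ i ∈ R, 0 < n i)
    (c : ι →₀ ℕ) :
    ∃ c' ∈ {c' : ι →₀ ℕ | ∀ j ∈ R, c' j < n j},
      monomial c 1 - monomial c' 1 ∈ binomialIdeal k R n a := by
  induction c using
      (InvImage.wf toColex (wellFounded_lt (α := Colex (ι →₀ ℕ)))).induction with
  | _ c ih =>
    by_cases hred : ∀ j ∈ R, c j < n j
    · exact ⟨c, hred, by simp⟩
    push Not at hred
    obtain ⟨i, hi, hle⟩ := hred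
    obtain ⟨d, rfl⟩ : ∃ d, c = d + Finsupp.single i (n i) :=
      ⟨c - Finsupp.single i (n i), (tsub_add_cancel_of_le (Finsupp.single_le_iff.2 hle)).symm⟩
    obtain ⟨c', hc', hmem⟩ :=
      ih _ (add_lt_add_right (toColex_sum_single_lt_single (a := a) (hn i hi)) (toColex d))
    refine ⟨c', hc', ?_⟩
    rw [← sub_add_sub_cancel _ (monomial (d + _) 1)]
    exact (binomialIdeal k R n a).add_mem (monomial_sub_monomial_mem_binomialIdeal hi d) hmem

variable {M : Type*} [AddCommMonoid M] {δ : ι → M}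

theorem binomialIdeal_le_ker_aeval_single
    (hrel : ∀ i ∈ R, n i • δ i = ∑ j ∈ Finset.univ.filter (· < i), a i j • δ j) :
    binomialIdeal k R n a ≤ RingHom.ker
      (aeval (fun i => (AddMonoidAlgebra.single (δ i) 1 : AddMonoidAlgebra k M))) := by
  refine Ideal.span_le.2 ?_
  rintro _ ⟨i, hi, rfl⟩
  simp only [SetLike.mem_coe, RingHom.mem_ker, map_sub, map_prod, map_pow, aeval_X,
    AddMonoidAlgebra.single_pow, one_pow, AddMonoidAlgebra.prod_single, Finset.prod_const_one,
    hrel i hi, sub_self]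

theorem ker_aeval_single_eq_binomialIdeal (hn : ∀ i ∈ R, 0 < n i)
    (hrel : ∀ i ∈ R, n i • δ i = ∑ j ∈ Finset.univ.filter (· < i), a i j • δ j)
    (hinj : Set.InjOn (Finsupp.linearCombination ℕ δ) {c | ∀ j ∈ R, c j < n j}) :
    RingHom.ker
        (aeval (fun i => (AddMonoidAlgebra.single (δ i) 1 : AddMonoidAlgebra k M))) =
      binomialIdeal k R n a := by
  refine le_antisymm (fun P hP => ?_) (binomialIdeal_le_ker_aeval_single hrel)
  obtain ⟨Q, hQ, hPQ⟩ :=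
    exists_support_subset_sub_mem (exists_reduced_monomial_sub_mem_binomialIdeal hn) P
  have hQ0 : Q = 0 := by
    refine eq_zero_of_aeval_single_eq_zero δ hinj hQ ?_
    have := binomialIdeal_le_ker_aeval_single hrel hPQ
    rwa [RingHom.mem_ker, map_sub, RingHom.mem_ker.1 hP, zero_sub, neg_eq_zero] at this
  simpa [hQ0] using hPQ

end Binomial

theorem typeC_semigroup_algebra_kernel_general (g : ℕ)
    (k : Type*) [Field k]
    (δ : Fin (g + 1) → ℕ × ℕ)
    (n : Fin (g + 1) → ℕ) (a : Fin (g + 1) → Fin (g + 1) → ℕ)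
    (hn : ∀ i : Fin (g + 1), 0 < (i : ℕ) → (i : ℕ) < g → 1 < n i)
    (hexpr : ∀ i : Fin (g + 1), 0 < (i : ℕ) → (i : ℕ) < g →
      n i • δ i = ∑ j ∈ Finset.univ.filter (fun j => j < i), a i j • δ j ∧
      0 < a i 0 ∧
      (∀ j : Fin (g + 1), 0 < (j : ℕ) → j < i → a i j < n j))
    (huniq : ∀ c c' : Fin (g + 1) → ℕ,
      (∀ j : Fin (g + 1), 0 < (j : ℕ) → (j : ℕ) < g → c j < n j) →
      (∀ j : Fin (g + 1), 0 < (j : ℕ) → (j : ℕ) < g → c' j < n j) →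
      ∑ j, c j • δ j = ∑ j, c' j • δ j → c = c') :
    RingHom.ker (MvPolynomial.aeval
        (fun i : Fin (g + 1) =>
          (AddMonoidAlgebra.single (δ i) 1 : AddMonoidAlgebra k (ℕ × ℕ))) :
        MvPolynomial (Fin (g + 1)) k →ₐ[k] AddMonoidAlgebra k (ℕ × ℕ)) =
      Ideal.span {P : MvPolynomial (Fin (g + 1)) k |
        ∃ i : Fin (g + 1), 0 < (i : ℕ) ∧ (i : ℕ) < g ∧
          P = X i ^ n i -
            ∏ j ∈ Finset.univ.filter (fun j => j < i), X j ^ a i j} := by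
  have hinj : Set.InjOn (Finsupp.linearCombination ℕ δ)
      {c | ∀ j ∈ {i : Fin (g + 1) | 0 < (i : ℕ) ∧ (i : ℕ) < g}, c j < n j} := by
    intro c hc c' hc' h
    simp only [Finsupp.linearCombination_apply, Finsupp.sum_fintype, zero_smul,
      implies_true] at h
    exact DFunLike.coe_injective
      (huniq c c' (fun j h₀ hg => hc j ⟨h₀, hg⟩) (fun j h₀ hg => hc' j ⟨h₀, hg⟩) h)
  rw [ker_aeval_single_eq_binomialIdeal (fun i hi => Nat.zero_lt_of_lt (hn i hi.1 hi.2))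
    (fun i hi => (hexpr i hi.1 hi.2).1) hinj, binomialIdeal]
  congr 1
  ext P
  simp [eq_comm, and_assoc]

/-- for a type C δ-sequence `Δ = {δ₀, …, δ_g} ⊆ ℕ²` (the first `g` elements
lie on a line through the origin, `δ_g` does not, and elements of `S_Δ` have unique
constrained expressions), the kernel of the `k`-algebra epimorphism
`ψ : k[V₀,…,V_g] → k[S_Δ]`, `ψ(V_i) = U^{δ_i}`, is generated by the binomials
`V_i^{n_i} - Π_{j<i} V_j^{a_{ij}}` for `0 < i < g`, where
`n_i δ_i = Σ_{j<i} a_{ij} δ_j` is the unique expression with `a_{i0} > 0` and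
`0 ≤ a_{ij} < n_j` for `1 ≤ j ≤ i-1`. -/
theorem typeC_semigroup_algebra_kernel (g : ℕ) (hg : 2 ≤ g)
    (k : Type*) [Field k]
    (δ : Fin (g + 1) → ℕ × ℕ) (hδ : ∀ i, δ i ≠ 0)
    (hline : ∃ u v : ℤ, (u, v) ≠ (0, 0) ∧
      (∀ i : Fin (g + 1), (i : ℕ) < g →
        u * ((δ i).1 : ℤ) + v * ((δ i).2 : ℤ) = 0) ∧
      (∀ i : Fin (g + 1), (i : ℕ) = g →
        u * ((δ i).1 : ℤ) + v * ((δ i).2 : ℤ) ≠ 0))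
    (n : Fin (g + 1) → ℕ) (a : Fin (g + 1) → Fin (g + 1) → ℕ)
    (hn : ∀ i : Fin (g + 1), 0 < (i : ℕ) → (i : ℕ) < g → 1 < n i)
    (hexpr : ∀ i : Fin (g + 1), 0 < (i : ℕ) → (i : ℕ) < g →
      n i • δ i = ∑ j ∈ Finset.univ.filter (fun j => j < i), a i j • δ j ∧
      0 < a i 0 ∧
      (∀ j : Fin (g + 1), 0 < (j : ℕ) → j < i → a i j < n j))
    (huniq : ∀ c c' : Fin (g + 1) → ℕ,
      (∀ j : Fin (g + 1), 0 < (j : ℕ) → (j : ℕ) < g → c j < n j) →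
      (∀ j : Fin (g + 1), 0 < (j : ℕ) → (j : ℕ) < g → c' j < n j) →
      ∑ j, c j • δ j = ∑ j, c' j • δ j → c = c') :
    RingHom.ker (MvPolynomial.aeval
        (fun i : Fin (g + 1) =>
          (AddMonoidAlgebra.single (δ i) 1 : AddMonoidAlgebra k (ℕ × ℕ))) :
        MvPolynomial (Fin (g + 1)) k →ₐ[k] AddMonoidAlgebra k (ℕ × ℕ)) =
      Ideal.span {P : MvPolynomial (Fin (g + 1)) k |
        ∃ i : Fin (g + 1), 0 < (i : ℕ) ∧ (i : ℕ) < g ∧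
          P = X i ^ n i -
            ∏ j ∈ Finset.univ.filter (fun j => j < i), X j ^ a i j} :=
  typeC_semigroup_algebra_kernel_general g k δ n a hn hexpr huniq
end
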